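/- arXiv:1402.1717 — 2 statements merged into one kernel-verified Lean document; each statement's English description precedes it below -/
import Mathlib

section
/- For every s ∈ ℂ, on (𝔳 × 𝔷) ∖ {(0,0)} one has ( Δ² + 4(4s+2ρ−2)² □ ) K_s = 2 B(s) (2s+q−1)(4s+2ρ−4) K_{s−1}. -/
open scoped InnerProductSpace

noncomputable section

/-- The left-invariant vector field on `N = 𝔳 × 𝔷` associated to `S ∈ 𝔳`:
`(Sf)(X,Z) = ∂_𝔳 f(X,Z)[S] - ½ ∂_𝔷 f(X,Z)[[S,X]]`. -/
def vfV {V W : Type*} [NormedAddCommGroup V] [InnerProductSpace ℝ V]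
    [NormedAddCommGroup W] [InnerProductSpace ℝ W]
    (br : V →ₗ[ℝ] V →ₗ[ℝ] W) (S : V) (f : V × W → ℂ) : V × W → ℂ :=
  fun x => fderiv ℝ f x (S, 0) - (1/2 : ℂ) * fderiv ℝ f x (0, br S x.1)

/-- The left-invariant vector field associated to `T ∈ 𝔷`: `(Tf)(X,Z) = ∂_𝔷 f(X,Z)[T]`. -/
def vfW {V W : Type*} [NormedAddCommGroup V] [InnerProductSpace ℝ V]
    [NormedAddCommGroup W] [InnerProductSpace ℝ W]
    (T : W) (f : V × W → ℂ) : V × W → ℂ :=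
  fun x => fderiv ℝ f x (0, T)

/-- Sub-Laplacian `∑_{j ∈ fs} S_j²` associated to a family of vectors in `𝔳`. -/
def subLap {V W : Type*} [NormedAddCommGroup V] [InnerProductSpace ℝ V]
    [NormedAddCommGroup W] [InnerProductSpace ℝ W] {ι : Type*}
    (br : V →ₗ[ℝ] V →ₗ[ℝ] W) (fs : Finset ι) (S : ι → V) (f : V × W → ℂ) : V × W → ℂ :=
  fun x => ∑ j ∈ fs, vfV br (S j) (vfV br (S j) f) x

/-- Central Laplacian `∑_{j ∈ fs} T_j²` associated to a family of vectors in `𝔷`. -/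
def boxLap {V W : Type*} [NormedAddCommGroup V] [InnerProductSpace ℝ V]
    [NormedAddCommGroup W] [InnerProductSpace ℝ W] {ι : Type*}
    (fs : Finset ι) (T : ι → W) (f : V × W → ℂ) : V × W → ℂ :=
  fun x => ∑ j ∈ fs, vfW (T j) (vfW (T j) f) x

/-- The norm function `K(X,Z) = |X|⁴ + |Z|²`. -/
def Kfun {V W : Type*} [NormedAddCommGroup V] [NormedAddCommGroup W] (x : V × W) : ℝ :=
  ‖x.1‖^4 + ‖x.2‖^2

/-- The complex power `K_s = K^s`. -/
def Ks {V W : Type*} [NormedAddCommGroup V] [NormedAddCommGroup W] (s : ℂ) (x : V × W) : ℂ :=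
  (Kfun x : ℂ) ^ s

/-- `ρ = (p+2q)/2` as a complex number. -/
def rhoC (p q : ℕ) : ℂ := ((p : ℂ) + 2*q)/2

/-- `B(s) = 4s(4s+2ρ-2)`. -/
def Bc (p q : ℕ) (s : ℂ) : ℂ := 4*s*(4*s + 2*(rhoC p q) - 2)

/-- The component `X₂` of `X ∈ 𝔳` in `𝔳₂ = 𝔳₁ᗮ`. -/
def projPerp {V : Type*} [NormedAddCommGroup V] [InnerProductSpace ℝ V]
    [FiniteDimensional ℝ V] (V₁ : Submodule ℝ V) (X : V) : V :=
  (V₁ᗮ.orthogonalProjectionOnto X : V)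

/-! The fields `S` and `T` are derivatives along the vector fields `(S, -½[S,X])` and `(0, T)`, so
`Δ` and `□` are sums of squares of derivations and obey the chain rule
`Δ(g^s) = s(s-1) g^(s-2) Σⱼ (Sⱼg)² + s g^(s-1) Δg` and the Leibniz rule. Writing
`SK = ⟨4|X|²X + J_Z X, S⟩`, the H-type identity `|J_Z X|² = 16|Z|²|X|²` gives `Σⱼ (SⱼK)² = 16|X|²K`
and `ΔK = (8+4p+8q)|X|²`, hence `ΔK_s = (16s² + (4p+8q-8)s)|X|² K_(s-1)`. Applying `Δ` once more
to `|X|² K_(s-1)` leaves a multiple of `|X|⁴ K_(s-2)`, which the central term cancels through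
`|Z|² = K - |X|⁴`. -/

open Filter Topology

theorem Complex.cpow_add_one {z : ℂ} (hz : z ≠ 0) (s : ℂ) : z ^ (s + 1) = z ^ s * z := by
  rw [Complex.cpow_add _ _ hz, Complex.cpow_one]

section DerivAlong

variable {E F : Type*} [NormedAddCommGroup E] [NormedSpace ℝ E]
  [NormedAddCommGroup F] [NormedSpace ℝ F]

def derivAlong (v : E → E) (f : E → F) (x : E) : F := fderiv ℝ f x (v x)

variable {v : E → E} {x : E}

theorem derivAlong_congr {f g : E → F} (h : f =ᶠ[𝓝 x] g) :
    derivAlong v f x = derivAlong v g x := by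
  rw [derivAlong, derivAlong, h.fderiv_eq]

theorem derivAlong_eventuallyEq {f g : E → F} (h : f =ᶠ[𝓝 x] g) :
    derivAlong v f =ᶠ[𝓝 x] derivAlong v g :=
  h.eventuallyEq_nhds.mono fun _ hy => derivAlong_congr hy

theorem derivAlong_add {f g : E → F} (hf : DifferentiableAt ℝ f x)
    (hg : DifferentiableAt ℝ g x) :
    derivAlong v (fun y => f y + g y) x = derivAlong v f x + derivAlong v g x := by
  simp only [derivAlong, fderiv_fun_add hf hg, add_apply]

theorem derivAlong_sub {f g : E → F} (hf : DifferentiableAt ℝ f x)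
    (hg : DifferentiableAt ℝ g x) :
    derivAlong v (fun y => f y - g y) x = derivAlong v f x - derivAlong v g x := by
  simp only [derivAlong, fderiv_fun_sub hf hg, sub_apply]

theorem derivAlong_ofReal {f : E → ℝ} (hf : DifferentiableAt ℝ f x) :
    derivAlong v (fun y => (f y : ℂ)) x = derivAlong v f x := by
  have h : HasFDerivAt (fun y => (f y : ℂ)) (Complex.ofRealCLM.comp (fderiv ℝ f x)) x :=
    Complex.ofRealCLM.hasFDerivAt.comp x hf.hasFDerivAt
  rw [derivAlong, derivAlong, h.fderiv]
  rfl

theorem ContDiffAt.differentiableAt_derivAlong {f : E → F} (hf : ContDiffAt ℝ 2 f x)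
    (hv : DifferentiableAt ℝ v x) : DifferentiableAt ℝ (derivAlong v f) x :=
  ((hf.fderiv_right (m := 1) le_rfl).differentiableAt one_ne_zero).clm_apply hv

theorem ContDiffAt.eventually_differentiableAt {f : E → F} (hf : ContDiffAt ℝ 2 f x) :
    ∀ᶠ y in 𝓝 x, DifferentiableAt ℝ f y :=
  (hf.eventually (by simp)).mono fun _ hy => hy.differentiableAt two_ne_zero

variable {𝔸 : Type*} [NormedCommRing 𝔸] [NormedAlgebra ℝ 𝔸]

theorem derivAlong_mul {f g : E → 𝔸} (hf : DifferentiableAt ℝ f x)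
    (hg : DifferentiableAt ℝ g x) :
    derivAlong v (fun y => f y * g y) x = f x * derivAlong v g x + g x * derivAlong v f x := by
  simp only [derivAlong, fderiv_fun_mul hf hg, add_apply, smul_apply, smul_eq_mul]

theorem derivAlong_const_mul {f : E → 𝔸} (hf : DifferentiableAt ℝ f x) (c : 𝔸) :
    derivAlong v (fun y => c * f y) x = c * derivAlong v f x := by
  simp only [derivAlong, fderiv_const_mul hf, smul_apply, smul_eq_mul]

theorem derivAlong_derivAlong_mul {f g : E → 𝔸} (hv : DifferentiableAt ℝ v x)
    (hf : ContDiffAt ℝ 2 f x) (hg : ContDiffAt ℝ 2 g x) :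
    derivAlong v (derivAlong v fun y => f y * g y) x
      = f x * derivAlong v (derivAlong v g) x + 2 * (derivAlong v f x * derivAlong v g x)
        + g x * derivAlong v (derivAlong v f) x := by
  have hfg : derivAlong v (fun y => f y * g y)
      =ᶠ[𝓝 x] fun y => f y * derivAlong v g y + g y * derivAlong v f y := by
    filter_upwards [hf.eventually_differentiableAt, hg.eventually_differentiableAt]
      with y hfy hgy using derivAlong_mul hfy hgy
  have hDf := hf.differentiableAt_derivAlong hv
  have hDg := hg.differentiableAt_derivAlong hv
  have hf₁ := hf.differentiableAt two_ne_zero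
  have hg₁ := hg.differentiableAt two_ne_zero
  rw [derivAlong_congr hfg, derivAlong_add (hf₁.fun_mul hDg) (hg₁.fun_mul hDf),
    derivAlong_mul hf₁ hDg, derivAlong_mul hg₁ hDf]
  ring

theorem derivAlong_derivAlong_const_mul {f : E → 𝔸} (hv : DifferentiableAt ℝ v x)
    (hf : ContDiffAt ℝ 2 f x) (c : 𝔸) :
    derivAlong v (derivAlong v fun y => c * f y) x = c * derivAlong v (derivAlong v f) x := by
  have hcf : derivAlong v (fun y => c * f y) =ᶠ[𝓝 x] fun y => c * derivAlong v f y :=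
    hf.eventually_differentiableAt.mono fun y hy => derivAlong_const_mul hy c
  rw [derivAlong_congr hcf, derivAlong_const_mul (hf.differentiableAt_derivAlong hv)]

variable {g : E → ℂ}

theorem HasFDerivAt.cpow_const {g' : E →L[ℝ] ℂ} (hg : HasFDerivAt g g' x)
    (h : g x ∈ Complex.slitPlane) (s : ℂ) :
    HasFDerivAt (fun y => g y ^ s) ((s * g x ^ (s - 1)) • g') x :=
  (Complex.hasStrictDerivAt_cpow_const h).hasDerivAt.comp_hasFDerivAt x hg

theorem ContDiffAt.cpow_const {n : WithTop ℕ∞} (hg : ContDiffAt ℝ n g x)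
    (h : g x ∈ Complex.slitPlane) (s : ℂ) : ContDiffAt ℝ n (fun y => g y ^ s) x :=
  ((analyticAt_id.cpow analyticAt_const h).contDiffAt.restrict_scalars ℝ).comp x hg

theorem derivAlong_cpow (hg : DifferentiableAt ℝ g x) (h : g x ∈ Complex.slitPlane) (s : ℂ) :
    derivAlong v (fun y => g y ^ s) x = s * g x ^ (s - 1) * derivAlong v g x := by
  simp only [derivAlong, (hg.hasFDerivAt.cpow_const h s).fderiv, smul_apply, smul_eq_mul]

theorem derivAlong_derivAlong_cpow (hv : DifferentiableAt ℝ v x) (hg : ContDiffAt ℝ 2 g x)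
    (h : g x ∈ Complex.slitPlane) (s : ℂ) :
    derivAlong v (derivAlong v fun y => g y ^ s) x
      = s * (s - 1) * g x ^ (s - 2) * derivAlong v g x ^ 2
        + s * g x ^ (s - 1) * derivAlong v (derivAlong v g) x := by
  have hslit : ∀ᶠ y in 𝓝 x, g y ∈ Complex.slitPlane :=
    hg.continuousAt.preimage_mem_nhds (Complex.isOpen_slitPlane.mem_nhds h)
  have hgs : derivAlong v (fun y => g y ^ s)
      =ᶠ[𝓝 x] fun y => (s * g y ^ (s - 1)) * derivAlong v g y := by
    filter_upwards [hg.eventually_differentiableAt, hslit] with y hgy hy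
      using derivAlong_cpow hgy hy s
  have hg₁ := hg.differentiableAt two_ne_zero
  have hpow : DifferentiableAt ℝ (fun y => g y ^ (s - 1)) x :=
    (hg.cpow_const h (s - 1)).differentiableAt two_ne_zero
  rw [derivAlong_congr hgs, derivAlong_mul (hpow.const_mul s)
    (hg.differentiableAt_derivAlong hv), derivAlong_const_mul hpow, derivAlong_cpow hg₁ h,
    show s - 1 - 1 = s - 2 by ring]
  ring

end DerivAlong

section SumSq

variable {E F : Type*} [NormedAddCommGroup E] [NormedSpace ℝ E]
  [NormedAddCommGroup F] [NormedSpace ℝ F] {ι : Type*} {fs : Finset ι} {v : ι → E → E} {x : E}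

def sumSqAlong (fs : Finset ι) (v : ι → E → E) (f : E → F) (x : E) : F :=
  ∑ j ∈ fs, derivAlong (v j) (derivAlong (v j) f) x

theorem sumSqAlong_congr {f g : E → F} (h : f =ᶠ[𝓝 x] g) :
    sumSqAlong fs v f x = sumSqAlong fs v g x :=
  Finset.sum_congr rfl fun _ _ => derivAlong_congr (derivAlong_eventuallyEq h)

theorem sumSqAlong_ofReal (hv : ∀ j, DifferentiableAt ℝ (v j) x) {f : E → ℝ}
    (hf : ContDiff ℝ 2 f) : sumSqAlong fs v (fun y => (f y : ℂ)) x = sumSqAlong fs v f x := by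
  have hf₁ : Differentiable ℝ f := hf.differentiable two_ne_zero
  simp only [sumSqAlong, Complex.ofReal_sum]
  refine Finset.sum_congr rfl fun j _ => ?_
  have h : derivAlong (v j) (fun y => (f y : ℂ)) = fun y => ((derivAlong (v j) f y : ℝ) : ℂ) :=
    funext fun y => derivAlong_ofReal (hf₁ y)
  rw [h, derivAlong_ofReal (hf.contDiffAt.differentiableAt_derivAlong (hv j))]

variable {𝔸 : Type*} [NormedCommRing 𝔸] [NormedAlgebra ℝ 𝔸]

theorem sumSqAlong_mul (hv : ∀ j, DifferentiableAt ℝ (v j) x) {f g : E → 𝔸}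
    (hf : ContDiffAt ℝ 2 f x) (hg : ContDiffAt ℝ 2 g x) :
    sumSqAlong fs v (fun y => f y * g y) x
      = f x * sumSqAlong fs v g x + 2 * ∑ j ∈ fs, derivAlong (v j) f x * derivAlong (v j) g x
        + g x * sumSqAlong fs v f x := by
  simp only [sumSqAlong, derivAlong_derivAlong_mul (hv _) hf hg, Finset.sum_add_distrib,
    Finset.mul_sum]

theorem sumSqAlong_const_mul (hv : ∀ j, DifferentiableAt ℝ (v j) x) {f : E → 𝔸}
    (hf : ContDiffAt ℝ 2 f x) (c : 𝔸) :
    sumSqAlong fs v (fun y => c * f y) x = c * sumSqAlong fs v f x := by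
  simp only [sumSqAlong, derivAlong_derivAlong_const_mul (hv _) hf, Finset.mul_sum]

theorem sumSqAlong_cpow (hv : ∀ j, DifferentiableAt ℝ (v j) x) {g : E → ℂ}
    (hg : ContDiffAt ℝ 2 g x) (h : g x ∈ Complex.slitPlane) (s : ℂ) :
    sumSqAlong fs v (fun y => g y ^ s) x
      = s * (s - 1) * g x ^ (s - 2) * ∑ j ∈ fs, derivAlong (v j) g x ^ 2
        + s * g x ^ (s - 1) * sumSqAlong fs v g x := by
  simp only [sumSqAlong, derivAlong_derivAlong_cpow (hv _) hg h, Finset.sum_add_distrib,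
    Finset.mul_sum]

end SumSq

section Kfun

variable {V W : Type*} [NormedAddCommGroup V] [NormedAddCommGroup W]

theorem Kfun_eq : (Kfun : V × W → ℝ) = fun y => ‖y.1‖ ^ 2 * ‖y.1‖ ^ 2 + ‖y.2‖ ^ 2 := by
  funext y
  rw [Kfun]
  ring

theorem Kfun_pos {x : V × W} (hx : x ≠ 0) : 0 < Kfun x := by
  rw [Kfun]
  rcases eq_or_ne x.1 0 with h1 | h1
  · have h2 : x.2 ≠ 0 := fun h2 => hx (Prod.ext h1 h2)
    rw [h1, norm_zero]
    positivity
  · positivity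

theorem Kfun_mem_slitPlane {x : V × W} (hx : x ≠ 0) : (Kfun x : ℂ) ∈ Complex.slitPlane :=
  Complex.ofReal_mem_slitPlane.2 (Kfun_pos hx)

theorem Ks_eq_cpow (s : ℂ) : (Ks s : V × W → ℂ) = fun y => (Kfun y : ℂ) ^ s :=
  rfl

theorem Kfun_cpow_sub_one (s : ℂ) {x : V × W} (hx : x ≠ 0) :
    (Kfun x : ℂ) ^ (s - 1) = (Kfun x : ℂ) ^ (s - 2) * Kfun x := by
  rw [show s - 1 = s - 2 + 1 by ring,
    Complex.cpow_add_one (Complex.ofReal_ne_zero.2 (Kfun_pos hx).ne')]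

end Kfun

section HeisenbergCalculus

variable {V W : Type*} [NormedAddCommGroup V] [InnerProductSpace ℝ V]
  [NormedAddCommGroup W] [InnerProductSpace ℝ W] {v : V × W → V × W} {x : V × W}

def horizontalField (br : V →ₗ[ℝ] V →ₗ[ℝ] W) (S : V) (x : V × W) : V × W :=
  (S, -(1 / 2 : ℝ) • br S x.1)

theorem vfV_eq_derivAlong (br : V →ₗ[ℝ] V →ₗ[ℝ] W) (S : V) (f : V × W → ℂ) :
    vfV br S f = derivAlong (horizontalField br S) f := by
  funext x
  have hsplit : horizontalField br S x = (S, 0) + (-(1 / 2 : ℝ)) • ((0 : V), br S x.1) := by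
    ext <;> simp [horizontalField]
  rw [derivAlong, hsplit, map_add, map_smul, vfV, Complex.real_smul]
  push_cast
  ring

theorem subLap_eq_sumSqAlong (br : V →ₗ[ℝ] V →ₗ[ℝ] W) {ι : Type*} (fs : Finset ι) (S : ι → V)
    (f : V × W → ℂ) : subLap br fs S f = sumSqAlong fs (fun j => horizontalField br (S j)) f := by
  funext x
  simp only [subLap, sumSqAlong, vfV_eq_derivAlong]

theorem boxLap_eq_sumSqAlong {ι : Type*} (fs : Finset ι) (T : ι → W) (f : V × W → ℂ) :
    boxLap fs T f = sumSqAlong fs (fun j (_ : V × W) => ((0 : V), T j)) f :=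
  rfl

theorem differentiable_horizontalField [FiniteDimensional ℝ V] (br : V →ₗ[ℝ] V →ₗ[ℝ] W)
    (S : V) : Differentiable ℝ (horizontalField br S) :=
  (differentiable_const S).prodMk
    (((br S).toContinuousLinearMap.differentiable.comp differentiable_fst).const_smul _)

theorem contDiff_normSq_fst {n : WithTop ℕ∞} : ContDiff ℝ n fun y : V × W => ‖y.1‖ ^ 2 :=
  (contDiff_norm_sq ℝ).comp contDiff_fst

theorem contDiff_normSq_snd {n : WithTop ℕ∞} : ContDiff ℝ n fun y : V × W => ‖y.2‖ ^ 2 :=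
  (contDiff_norm_sq ℝ).comp contDiff_snd

theorem contDiff_Kfun {n : WithTop ℕ∞} : ContDiff ℝ n (Kfun : V × W → ℝ) := by
  rw [Kfun_eq]
  exact (contDiff_normSq_fst.mul contDiff_normSq_fst).add contDiff_normSq_snd

theorem derivAlong_normSq_fst :
    derivAlong v (fun y : V × W => ‖y.1‖ ^ 2) x = 2 * ⟪x.1, (v x).1⟫_ℝ := by
  simp [derivAlong, (hasFDerivAt_fst (p := x)).norm_sq.fderiv]

theorem derivAlong_normSq_snd :
    derivAlong v (fun y : V × W => ‖y.2‖ ^ 2) x = 2 * ⟪x.2, (v x).2⟫_ℝ := by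
  simp [derivAlong, (hasFDerivAt_snd (p := x)).norm_sq.fderiv]

theorem derivAlong_inner_fst (a : V) :
    derivAlong v (fun y : V × W => ⟪y.1, a⟫_ℝ) x = ⟪(v x).1, a⟫_ℝ := by
  simp [derivAlong, ((hasFDerivAt_fst (p := x)).inner ℝ (hasFDerivAt_const a x)).fderiv]

theorem derivAlong_inner_snd (b : W) :
    derivAlong v (fun y : V × W => ⟪y.2, b⟫_ℝ) x = ⟪(v x).2, b⟫_ℝ := by
  simp [derivAlong, ((hasFDerivAt_snd (p := x)).inner ℝ (hasFDerivAt_const b x)).fderiv]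

theorem derivAlong_inner_snd_apply_fst [FiniteDimensional ℝ V] (A : V →ₗ[ℝ] W) :
    derivAlong v (fun y : V × W => ⟪y.2, A y.1⟫_ℝ) x = ⟪(v x).2, A x.1⟫_ℝ + ⟪x.2, A (v x).1⟫_ℝ := by
  have hA : HasFDerivAt (fun y : V × W => A y.1)
      (A.toContinuousLinearMap.comp (ContinuousLinearMap.fst ℝ V W)) x :=
    A.toContinuousLinearMap.hasFDerivAt.comp x hasFDerivAt_fst
  simp [derivAlong, ((hasFDerivAt_snd (p := x)).inner ℝ hA).fderiv, add_comm]

theorem derivAlong_Kfun :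
    derivAlong v Kfun x = 4 * ‖x.1‖ ^ 2 * ⟪x.1, (v x).1⟫_ℝ + 2 * ⟪x.2, (v x).2⟫_ℝ := by
  have hN : DifferentiableAt ℝ (fun y : V × W => ‖y.1‖ ^ 2) x :=
    contDiff_normSq_fst.differentiable one_ne_zero x
  have hM : DifferentiableAt ℝ (fun y : V × W => ‖y.2‖ ^ 2) x :=
    contDiff_normSq_snd.differentiable one_ne_zero x
  rw [Kfun_eq, derivAlong_add (hN.fun_mul hN) hM, derivAlong_mul hN hN, derivAlong_normSq_fst,
    derivAlong_normSq_snd]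
  ring

theorem derivAlong_horizontalField_Kfun (br : V →ₗ[ℝ] V →ₗ[ℝ] W) (S : V) :
    derivAlong (horizontalField br S) Kfun
      = fun y : V × W => 4 * ‖y.1‖ ^ 2 * ⟪y.1, S⟫_ℝ - ⟪y.2, br S y.1⟫_ℝ := by
  funext y
  rw [derivAlong_Kfun]
  simp only [horizontalField, inner_smul_right]
  ring

theorem derivAlong_horizontalField_normSq_fst (br : V →ₗ[ℝ] V →ₗ[ℝ] W) (S : V) :
    derivAlong (horizontalField br S) (fun y : V × W => ‖y.1‖ ^ 2)
      = fun y : V × W => 2 * ⟪y.1, S⟫_ℝ :=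
  funext fun _ => derivAlong_normSq_fst

theorem derivAlong_derivAlong_horizontalField_Kfun [FiniteDimensional ℝ V] {br : V →ₗ[ℝ] V →ₗ[ℝ] W}
    (hbr : br.IsAlt) (S : V) :
    derivAlong (horizontalField br S) (derivAlong (horizontalField br S) Kfun) x
      = 8 * ⟪x.1, S⟫_ℝ ^ 2 + 4 * ‖x.1‖ ^ 2 * ‖S‖ ^ 2 + 1 / 2 * ‖br S x.1‖ ^ 2 := by
  have hN : Differentiable ℝ fun y : V × W => 4 * ‖y.1‖ ^ 2 :=
    (contDiff_normSq_fst.differentiable one_ne_zero).const_mul 4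
  have hS : Differentiable ℝ fun y : V × W => ⟪y.1, S⟫_ℝ :=
    differentiable_fst.inner ℝ (differentiable_const S)
  have hbrS : Differentiable ℝ fun y : V × W => ⟪y.2, br S y.1⟫_ℝ :=
    differentiable_snd.inner ℝ ((br S).toContinuousLinearMap.differentiable.comp differentiable_fst)
  rw [derivAlong_horizontalField_Kfun, derivAlong_sub ((hN x).fun_mul (hS x)) (hbrS x),
    derivAlong_mul (hN x) (hS x), derivAlong_const_mul (contDiff_normSq_fst.differentiable
      one_ne_zero x), derivAlong_normSq_fst, derivAlong_inner_fst, derivAlong_inner_snd_apply_fst]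
  simp only [horizontalField, hbr.self_eq_zero, inner_zero_right, real_inner_smul_left,
    real_inner_self_eq_norm_sq]
  ring

theorem derivAlong_derivAlong_horizontalField_normSq_fst (br : V →ₗ[ℝ] V →ₗ[ℝ] W) (S : V) :
    derivAlong (horizontalField br S) (derivAlong (horizontalField br S)
      (fun y : V × W => ‖y.1‖ ^ 2)) x = 2 * ‖S‖ ^ 2 := by
  rw [derivAlong_horizontalField_normSq_fst,
    derivAlong_const_mul (differentiableAt_fst.inner ℝ (differentiableAt_const S)),
    derivAlong_inner_fst, horizontalField, real_inner_self_eq_norm_sq]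

theorem derivAlong_vertical_Kfun (T : W) :
    derivAlong (fun _ : V × W => ((0 : V), T)) Kfun = fun y : V × W => 2 * ⟪y.2, T⟫_ℝ := by
  funext y
  rw [derivAlong_Kfun]
  simp

theorem derivAlong_derivAlong_vertical_Kfun (T : W) :
    derivAlong (fun _ : V × W => ((0 : V), T)) (derivAlong (fun _ => ((0 : V), T)) Kfun) x
      = 2 * ‖T‖ ^ 2 := by
  rw [derivAlong_vertical_Kfun,
    derivAlong_const_mul (differentiableAt_snd.inner ℝ (differentiableAt_const T)),
    derivAlong_inner_snd, real_inner_self_eq_norm_sq]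

end HeisenbergCalculus

section HType

variable {V W : Type*} [NormedAddCommGroup V] [InnerProductSpace ℝ V]
  [NormedAddCommGroup W] [InnerProductSpace ℝ W]

structure IsHType (br : V →ₗ[ℝ] V →ₗ[ℝ] W) (J : W →ₗ[ℝ] V →ₗ[ℝ] V) : Prop where
  isAlt : br.IsAlt
  inner_J_apply : ∀ (z : W) (X Y : V), ⟪J z X, Y⟫_ℝ = ⟪z, br X Y⟫_ℝ
  J_J_apply : ∀ (z : W) (X : V), J z (J z X) = (-16 * ‖z‖ ^ 2) • X

namespace IsHType

variable {br : V →ₗ[ℝ] V →ₗ[ℝ] W} {J : W →ₗ[ℝ] V →ₗ[ℝ] V} {ι κ : Type*} [Fintype ι] [Fintype κ]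

theorem inner_J_apply_self (h : IsHType br J) (z : W) (X : V) : ⟪J z X, X⟫_ℝ = 0 := by
  rw [h.inner_J_apply, h.isAlt.self_eq_zero, inner_zero_right]

theorem inner_J_apply_swap (h : IsHType br J) (z : W) (X Y : V) :
    ⟪J z X, Y⟫_ℝ = -⟪J z Y, X⟫_ℝ := by
  rw [h.inner_J_apply, h.inner_J_apply, ← h.isAlt.neg, inner_neg_right]

theorem norm_J_apply_sq (h : IsHType br J) (z : W) (X : V) :
    ‖J z X‖ ^ 2 = 16 * ‖z‖ ^ 2 * ‖X‖ ^ 2 := by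
  rw [← real_inner_self_eq_norm_sq, h.inner_J_apply_swap, h.J_J_apply, real_inner_smul_left,
    real_inner_self_eq_norm_sq]
  ring

theorem sum_norm_br_sq (h : IsHType br J) (S : OrthonormalBasis ι ℝ V)
    (T : OrthonormalBasis κ ℝ W) (X : V) :
    ∑ j, ‖br (S j) X‖ ^ 2 = 16 * Fintype.card κ * ‖X‖ ^ 2 := by
  have hbr : ∀ j, ‖br (S j) X‖ ^ 2 = ∑ k, ⟪J (T k) X, S j⟫_ℝ ^ 2 := fun j => by
    rw [← T.sum_sq_inner_right]
    refine Finset.sum_congr rfl fun k _ => ?_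
    rw [← h.inner_J_apply, h.inner_J_apply_swap, neg_sq]
  have hJ : ∀ k, ∑ j, ⟪J (T k) X, S j⟫_ℝ ^ 2 = 16 * ‖X‖ ^ 2 := fun k => by
    rw [S.sum_sq_inner_left, h.norm_J_apply_sq, T.orthonormal.1 k]
    ring
  simp only [hbr]
  rw [Finset.sum_comm]
  simp only [hJ, Finset.sum_const, Finset.card_univ, nsmul_eq_mul]
  ring

theorem derivAlong_horizontalField_Kfun_eq_inner (h : IsHType br J) (S : V) (y : V × W) :
    derivAlong (horizontalField br S) Kfun y = ⟪S, (4 * ‖y.1‖ ^ 2) • y.1 + J y.2 y.1⟫_ℝ := by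
  rw [derivAlong_horizontalField_Kfun, real_inner_comm, inner_add_left, real_inner_smul_left,
    h.inner_J_apply_swap, h.inner_J_apply]
  ring

theorem sum_derivAlong_horizontalField_Kfun_sq (h : IsHType br J) (S : OrthonormalBasis ι ℝ V)
    (x : V × W) :
    ∑ j, derivAlong (horizontalField br (S j)) Kfun x ^ 2 = 16 * ‖x.1‖ ^ 2 * Kfun x := by
  simp only [h.derivAlong_horizontalField_Kfun_eq_inner]
  rw [S.sum_sq_inner_right, norm_add_sq_real, norm_smul, real_inner_smul_left,
    h.norm_J_apply_sq, real_inner_comm, h.inner_J_apply_self, Kfun, Real.norm_of_nonneg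
    (by positivity)]
  ring

theorem sum_inner_mul_derivAlong_horizontalField_Kfun (h : IsHType br J)
    (S : OrthonormalBasis ι ℝ V) (x : V × W) :
    ∑ j, ⟪x.1, S j⟫_ℝ * derivAlong (horizontalField br (S j)) Kfun x = 4 * ‖x.1‖ ^ 4 := by
  simp only [h.derivAlong_horizontalField_Kfun_eq_inner]
  rw [S.sum_inner_mul_inner, inner_add_right, real_inner_smul_right,
    real_inner_comm (J x.2 x.1), h.inner_J_apply_self, real_inner_self_eq_norm_sq]
  ring

theorem sumSqAlong_horizontalField_Kfun [FiniteDimensional ℝ V] (h : IsHType br J)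
    (S : OrthonormalBasis ι ℝ V) (T : OrthonormalBasis κ ℝ W) (x : V × W) :
    sumSqAlong Finset.univ (fun j => horizontalField br (S j)) Kfun x
      = (8 + 4 * Fintype.card ι + 8 * Fintype.card κ) * ‖x.1‖ ^ 2 := by
  simp only [sumSqAlong, derivAlong_derivAlong_horizontalField_Kfun h.isAlt, Finset.sum_add_distrib,
    ← Finset.mul_sum, S.sum_sq_inner_left, S.orthonormal.1, h.sum_norm_br_sq S T, one_pow,
    Finset.sum_const, Finset.card_univ, nsmul_eq_mul]
  ring

end IsHType

end HType

section KsFormulas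

variable {V W : Type*} [NormedAddCommGroup V] [InnerProductSpace ℝ V]
  [NormedAddCommGroup W] [InnerProductSpace ℝ W] {ι κ : Type*} [Fintype ι] [Fintype κ]
  {x : V × W}

theorem sumSqAlong_horizontalField_normSq_fst (br : V →ₗ[ℝ] V →ₗ[ℝ] W)
    (S : OrthonormalBasis ι ℝ V) :
    sumSqAlong Finset.univ (fun j => horizontalField br (S j)) (fun y : V × W => ‖y.1‖ ^ 2) x
      = 2 * Fintype.card ι := by
  simp [sumSqAlong, derivAlong_derivAlong_horizontalField_normSq_fst, S.orthonormal.1, mul_comm]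

theorem sumSqAlong_vertical_Kfun (T : OrthonormalBasis κ ℝ W) :
    sumSqAlong Finset.univ (fun k (_ : V × W) => ((0 : V), T k)) Kfun x = 2 * Fintype.card κ := by
  simp [sumSqAlong, derivAlong_derivAlong_vertical_Kfun, T.orthonormal.1, mul_comm]

theorem sum_derivAlong_vertical_Kfun_sq (T : OrthonormalBasis κ ℝ W) :
    ∑ k, derivAlong (fun _ : V × W => ((0 : V), T k)) Kfun x ^ 2 = 4 * ‖x.2‖ ^ 2 := by
  simp only [derivAlong_vertical_Kfun, mul_pow, ← Finset.mul_sum, T.sum_sq_inner_left]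
  norm_num

theorem contDiff_ofReal_Kfun {n : WithTop ℕ∞} :
    ContDiff ℝ n fun y : V × W => (Kfun y : ℂ) :=
  Complex.ofRealCLM.contDiff.comp contDiff_Kfun

theorem contDiff_ofReal_normSq_fst {n : WithTop ℕ∞} :
    ContDiff ℝ n fun y : V × W => ((‖y.1‖ ^ 2 : ℝ) : ℂ) :=
  Complex.ofRealCLM.contDiff.comp contDiff_normSq_fst

theorem contDiffAt_Ks {n : WithTop ℕ∞} (s : ℂ) (hx : x ≠ 0) : ContDiffAt ℝ n (Ks s) x :=
  contDiff_ofReal_Kfun.contDiffAt.cpow_const (Kfun_mem_slitPlane hx) s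

theorem derivAlong_ofReal_Kfun (v : V × W → V × W) :
    derivAlong v (fun y => (Kfun y : ℂ)) x = derivAlong v Kfun x :=
  derivAlong_ofReal (contDiff_Kfun.differentiable one_ne_zero x)

theorem IsHType.subLap_Ks [FiniteDimensional ℝ V] {br : V →ₗ[ℝ] V →ₗ[ℝ] W}
    {J : W →ₗ[ℝ] V →ₗ[ℝ] V} (h : IsHType br J) (S : OrthonormalBasis ι ℝ V)
    (T : OrthonormalBasis κ ℝ W) (s : ℂ) (hx : x ≠ 0) :
    subLap br Finset.univ (fun j => S j) (Ks s) x
      = (16 * s ^ 2 + (4 * Fintype.card ι + 8 * Fintype.card κ - 8) * s) * ‖x.1‖ ^ 2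
        * Ks (s - 1) x := by
  have hv j := differentiable_horizontalField br (S j) x
  have hgrad : ∑ j, derivAlong (horizontalField br (S j)) (fun y => (Kfun y : ℂ)) x ^ 2
      = 16 * ‖x.1‖ ^ 2 * Kfun x := by
    simp only [derivAlong_ofReal_Kfun]
    exact_mod_cast h.sum_derivAlong_horizontalField_Kfun_sq S x
  simp only [subLap_eq_sumSqAlong, Ks_eq_cpow]
  rw [sumSqAlong_cpow hv contDiff_ofReal_Kfun.contDiffAt (Kfun_mem_slitPlane hx),
    sumSqAlong_ofReal hv contDiff_Kfun, h.sumSqAlong_horizontalField_Kfun S T, hgrad]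
  push_cast
  linear_combination (-16 * s * (s - 1) * (‖x.1‖ : ℂ) ^ 2) * Kfun_cpow_sub_one s hx

theorem IsHType.subLap_normSq_mul_Ks [FiniteDimensional ℝ V] {br : V →ₗ[ℝ] V →ₗ[ℝ] W}
    {J : W →ₗ[ℝ] V →ₗ[ℝ] V} (h : IsHType br J) (S : OrthonormalBasis ι ℝ V)
    (T : OrthonormalBasis κ ℝ W) (t : ℂ) (hx : x ≠ 0) :
    subLap br Finset.univ (fun j => S j) (fun y => ((‖y.1‖ ^ 2 : ℝ) : ℂ) * Ks t y) x
      = 2 * Fintype.card ι * Ks t x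
        + (16 * t ^ 2 + (4 * Fintype.card ι + 8 * Fintype.card κ + 8) * t) * ‖x.1‖ ^ 4
          * Ks (t - 1) x := by
  have hv j := differentiable_horizontalField br (S j) x
  have hcross : ∑ j, derivAlong (horizontalField br (S j)) (fun y => ((‖y.1‖ ^ 2 : ℝ) : ℂ)) x
      * derivAlong (horizontalField br (S j)) (Ks t) x = 8 * t * ‖x.1‖ ^ 4 * Ks (t - 1) x := by
    simp only [Ks_eq_cpow, derivAlong_cpow (contDiff_ofReal_Kfun.differentiable one_ne_zero x)
      (Kfun_mem_slitPlane hx), derivAlong_ofReal_Kfun,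
      derivAlong_ofReal (contDiff_normSq_fst.differentiable one_ne_zero x), derivAlong_normSq_fst]
    calc _ = 2 * t * (Kfun x : ℂ) ^ (t - 1)
          * ((∑ j, ⟪x.1, S j⟫_ℝ * derivAlong (horizontalField br (S j)) Kfun x : ℝ) : ℂ) := by
          push_cast
          rw [Finset.mul_sum]
          refine Finset.sum_congr rfl fun j _ => ?_
          simp only [horizontalField]
          ring
      _ = _ := by
          rw [h.sum_inner_mul_derivAlong_horizontalField_Kfun]
          push_cast
          ring
  rw [subLap_eq_sumSqAlong,
    sumSqAlong_mul hv contDiff_ofReal_normSq_fst.contDiffAt (contDiffAt_Ks t hx),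
    ← subLap_eq_sumSqAlong br Finset.univ (fun j => S j) (Ks t), h.subLap_Ks S T t hx, hcross,
    sumSqAlong_ofReal hv contDiff_normSq_fst, sumSqAlong_horizontalField_normSq_fst]
  push_cast
  ring

theorem boxLap_Ks (T : OrthonormalBasis κ ℝ W) (s : ℂ) (hx : x ≠ 0) :
    boxLap Finset.univ (fun k => T k) (Ks s) x
      = 4 * s * (s - 1) * ‖x.2‖ ^ 2 * Ks (s - 2) x + 2 * Fintype.card κ * s * Ks (s - 1) x := by
  have hv k : DifferentiableAt ℝ (fun _ : V × W => ((0 : V), T k)) x := differentiableAt_const _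
  have hgrad : ∑ k, derivAlong (fun _ : V × W => ((0 : V), T k)) (fun y => (Kfun y : ℂ)) x ^ 2
      = 4 * ‖x.2‖ ^ 2 := by
    simp only [derivAlong_ofReal_Kfun]
    exact_mod_cast sum_derivAlong_vertical_Kfun_sq (x := x) T
  simp only [boxLap_eq_sumSqAlong, Ks_eq_cpow]
  rw [sumSqAlong_cpow hv contDiff_ofReal_Kfun.contDiffAt (Kfun_mem_slitPlane hx),
    sumSqAlong_ofReal hv contDiff_Kfun, sumSqAlong_vertical_Kfun, hgrad]
  push_cast
  ring

end KsFormulas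

theorem deltaSqPlusBoxKs_general {V W : Type*} [NormedAddCommGroup V] [InnerProductSpace ℝ V]
    [NormedAddCommGroup W] [InnerProductSpace ℝ W]
    [FiniteDimensional ℝ V]
    (p q : ℕ)
    (br : V →ₗ[ℝ] V →ₗ[ℝ] W) (hbr : ∀ X : V, br X X = 0)
    (J : W →ₗ[ℝ] V →ₗ[ℝ] V)
    (hJ : ∀ (z : W) (X Y : V), ⟪J z X, Y⟫_ℝ = ⟪z, br X Y⟫_ℝ)
    (hH : ∀ (z : W) (X : V), J z (J z X) = (-16 * ‖z‖^2) • X)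
    (S : OrthonormalBasis (Fin p) ℝ V)
    (T : OrthonormalBasis (Fin q) ℝ W)
    (s : ℂ) :
    ∀ x : V × W, x ≠ 0 →
      subLap br Finset.univ (fun j => S j) (subLap br Finset.univ (fun j => S j) (Ks s)) x
          + 4*(4*s + 2*(rhoC p q) - 2)^2 * boxLap Finset.univ (fun j => T j) (Ks s) x
        = 2 * Bc p q s * (2*s + (q : ℂ) - 1) * (4*s + 2*(rhoC p q) - 4) * Ks (s-1) x := by
  intro x hx
  have h : IsHType br J := ⟨hbr, hJ, hH⟩
  have hv j := differentiable_horizontalField br (S j) x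
  have hΔ : subLap br Finset.univ (fun j => S j) (Ks s) =ᶠ[𝓝 x] fun y =>
      (16 * s ^ 2 + (4 * p + 8 * q - 8) * s) * (((‖y.1‖ ^ 2 : ℝ) : ℂ) * Ks (s - 1) y) := by
    filter_upwards [eventually_ne_nhds hx] with y hy
    rw [h.subLap_Ks S T s hy, Fintype.card_fin, Fintype.card_fin]
    push_cast
    ring
  rw [subLap_eq_sumSqAlong, sumSqAlong_congr hΔ, sumSqAlong_const_mul hv
    (contDiff_ofReal_normSq_fst.contDiffAt.mul (contDiffAt_Ks (s - 1) hx)),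
    ← subLap_eq_sumSqAlong, h.subLap_normSq_mul_Ks S T (s - 1) hx, boxLap_Ks T s hx,
    show s - 1 - 1 = s - 2 by ring]
  have hZ : (‖x.2‖ : ℂ) ^ 2 = Kfun x - (‖x.1‖ : ℂ) ^ 4 := by rw [Kfun]; push_cast; ring
  simp only [Ks, Bc, rhoC, Fintype.card_fin]
  linear_combination (-16 * s * (s - 1) * (4 * s + p + 2 * q - 2) ^ 2) * Kfun_cpow_sub_one s hx
    + 16 * s * (s - 1) * (4 * s + p + 2 * q - 2) ^ 2 * (Kfun x : ℂ) ^ (s - 2) * hZ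

/-- `(Δ² + 4(4s+2ρ-2)² □) K_s = 2B(s)(2s+q-1)(4s+2ρ-4) K_{s-1}`
on `(𝔳 × 𝔷) ∖ {(0,0)}`. -/
theorem deltaSqPlusBoxKs {V W : Type*} [NormedAddCommGroup V] [InnerProductSpace ℝ V]
    [NormedAddCommGroup W] [InnerProductSpace ℝ W]
    [FiniteDimensional ℝ V] [FiniteDimensional ℝ W]
    (p q : ℕ) (hp : Module.finrank ℝ V = p) (hq : Module.finrank ℝ W = q)
    (br : V →ₗ[ℝ] V →ₗ[ℝ] W) (hbr : ∀ X : V, br X X = 0)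
    (J : W →ₗ[ℝ] V →ₗ[ℝ] V)
    (hJ : ∀ (z : W) (X Y : V), ⟪J z X, Y⟫_ℝ = ⟪z, br X Y⟫_ℝ)
    (hH : ∀ (z : W) (X : V), J z (J z X) = (-16 * ‖z‖^2) • X)
    (S : OrthonormalBasis (Fin p) ℝ V)
    (T : OrthonormalBasis (Fin q) ℝ W)
    (s : ℂ) :
    ∀ x : V × W, x ≠ 0 →
      subLap br Finset.univ (fun j => S j) (subLap br Finset.univ (fun j => S j) (Ks s)) x
          + 4*(4*s + 2*(rhoC p q) - 2)^2 * boxLap Finset.univ (fun j => T j) (Ks s) x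
        = 2 * Bc p q s * (2*s + (q : ℂ) - 1) * (4*s + 2*(rhoC p q) - 4) * Ks (s-1) x :=
  deltaSqPlusBoxKs_general p q br hbr J hJ hH S T s
end
end

section
/- For all α, β, z, w ∈ ℝ and every integer n ≥ 1 one has (n+β+1) [ (2n+α+β+2)z + (2n+α+1)w ] P_n^{(α,β)}(z,w) = (n+α)(2n+α+β+2)(z+w)² P_{n−1}^{(α,β+2)}(z,w) + (n+1)(β+1) P_{n+1}^{(α,β)}(z,w). -/
noncomputable section

/-- Generalized binomial coefficient `C(y, m) = y(y-1)⋯(y-m+1)/m!`. -/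
def genBinom (y : ℝ) (m : ℕ) : ℝ :=
  (∏ i ∈ Finset.range m, (y - i)) / (Nat.factorial m)

lemma genBinom_zero (y : ℝ) : genBinom y 0 = 1 := by simp [genBinom]

lemma genBinom_one (y : ℝ) : genBinom y 1 = y := by simp [genBinom]

lemma genBinom_succ (y : ℝ) (m : ℕ) :
    ((m : ℝ) + 1) * genBinom y (m+1) = (y - m) * genBinom y m := by
  have h1 : ((Nat.factorial m : ℝ)) ≠ 0 := Nat.cast_ne_zero.2 (Nat.factorial_ne_zero m)
  rw [genBinom, genBinom, Finset.prod_range_succ, Nat.factorial_succ]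
  push_cast
  field_simp

lemma genBinom_succ' (y : ℝ) (m : ℕ) :
    ((m : ℝ) + 1) * genBinom (y+1) (m+1) = (y + 1) * genBinom y m := by
  have h1 : ((Nat.factorial m : ℝ)) ≠ 0 := Nat.cast_ne_zero.2 (Nat.factorial_ne_zero m)
  rw [genBinom, genBinom, Finset.prod_range_succ', Nat.factorial_succ]
  rw [Finset.prod_congr rfl (fun i hi => (by push_cast; ring : y + 1 - ((i:ℕ)+1 : ℕ) = y - i))]
  push_cast
  field_simp
  ring

lemma keyCoef (α β : ℝ) (n : ℕ) (hn : 1 ≤ n) (m : ℕ) (hm : m ≤ n + 1) :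
    ((n:ℝ)+β+1)*(β+1) * (if m = n+1 then 0 else genBinom ((n:ℝ)+α) m * genBinom ((n:ℝ)+β) (n-m))
    + ((n:ℝ)+β+1)*(2*(n:ℝ)+α+1) * (if m = 0 then 0 else genBinom ((n:ℝ)+α) (m-1) * genBinom ((n:ℝ)+β) (n-(m-1)))
    = ((n:ℝ)+α)*(2*(n:ℝ)+α+β+2) * (if m = 0 then 0 else if m-1 = 0 then 0 else
        genBinom ((n:ℝ)-1+α) (m-1-1) * genBinom ((n:ℝ)-1+(β+2)) (n-1-(m-1-1)))
    + ((n:ℝ)+1)*(β+1) * (genBinom ((n:ℝ)+1+α) m * genBinom ((n:ℝ)+1+β) (n+1-m)) := by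
  have hn0 : ((n:ℝ)) ≠ 0 := Nat.cast_ne_zero.2 (by omega)
  rcases Nat.lt_or_ge m 2 with h2 | h2
  · interval_cases m
    · -- m = 0
      rw [if_neg (by omega : ¬(0 = n+1)), if_pos rfl, if_pos rfl]
      simp only [Nat.sub_zero, genBinom_zero, one_mul, mul_zero, add_zero, zero_add]
      rw [show (n:ℝ)+1+β = ((n:ℝ)+β)+1 by ring]
      have h := genBinom_succ' ((n:ℝ)+β) n
      refine mul_left_cancel₀ (show ((n:ℝ)+1) ≠ 0 by positivity) ?_
      linear_combination (-(((n:ℝ)+1)*(β+1))) * h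
    · -- m = 1
      rw [if_neg (by omega : ¬(1 = n+1)), if_neg (by omega : ¬(1 = 0)),
        if_neg (by omega : ¬(1 = 0)), if_pos rfl]
      simp only [show (1:ℕ)-1 = 0 from rfl, Nat.sub_zero, Nat.add_sub_cancel, genBinom_one,
        genBinom_zero, one_mul, mul_one]
      rw [show (n:ℝ)+1+β = ((n:ℝ)+β)+1 by ring]
      have e1 : n - 1 + 1 = n := by omega
      have hq0 := genBinom_succ ((n:ℝ)+β) (n-1)
      have hq2 := genBinom_succ' ((n:ℝ)+β) (n-1)
      rw [e1, Nat.cast_sub hn, Nat.cast_one] at hq0 hq2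
      refine mul_left_cancel₀ hn0 ?_
      linear_combination (((n:ℝ)+β+1)*(2*(n:ℝ)+α+1)) * hq0
        + (-(((n:ℝ)+1)*(β+1)*((n:ℝ)+1+α))) * hq2
  · obtain ⟨k, rfl⟩ : ∃ k, m = k + 2 := ⟨m - 2, by omega⟩
    simp only [show k+2-1 = k+1 from rfl, show k+1-1 = k from rfl,
      if_neg (by omega : ¬(k+2 = 0)), if_neg (by omega : ¬(k+1 = 0))]
    rcases Nat.lt_or_ge (k+2) (n+1) with hlt | hge
    · -- k + 2 ≤ n
      have hkn : k + 2 ≤ n := by omega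
      rw [if_neg (by omega : ¬(k+2 = n+1))]
      rw [show (n:ℝ)+1+α = ((n:ℝ)+α)+1 by ring, show (n:ℝ)+1+β = ((n:ℝ)+β+1) by ring,
        show (n:ℝ)-1+(β+2) = ((n:ℝ)+β+1) by ring,
        show n-1-k = n-(k+1) from by omega, show n+1-(k+2) = n-(k+1) from by omega]
      have h1 := genBinom_succ ((n:ℝ)+α) (k+1)
      have h2 := genBinom_succ ((n:ℝ)+β) (n-(k+2))
      have h3a := genBinom_succ' ((n:ℝ)-1+α) k
      have h3b := genBinom_succ' ((n:ℝ)+β) (n-(k+2))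
      have h4 := genBinom_succ' ((n:ℝ)+α) (k+1)
      rw [show n-(k+2)+1 = n-(k+1) from by omega, Nat.cast_sub hkn] at h2 h3b
      rw [show k+1+1 = k+2 from rfl] at h1 h4
      rw [show (n:ℝ)-1+α+1 = (n:ℝ)+α by ring] at h3a
      push_cast at h1 h2 h3a h3b h4
      have hk2 : ((k:ℝ)+2) ≠ 0 := by positivity
      have hnk : ((n:ℝ)-((k:ℝ)+2)+1) ≠ 0 := by
        have hle : ((k:ℝ)+2) ≤ (n:ℝ) := by exact_mod_cast hkn
        intro hcon; nlinarith
      refine mul_left_cancel₀ (mul_ne_zero hk2 hnk) ?_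
      linear_combination
        (((n:ℝ)-((k:ℝ)+2)+1)*(((n:ℝ)+β+1)*(β+1))*genBinom ((n:ℝ)+β) (n-(k+2))) * h1
        + (((k:ℝ)+2)*(((n:ℝ)+β+1)*(2*(n:ℝ)+α+1))*genBinom ((n:ℝ)+α) (k+1)) * h2
        + (((k:ℝ)+2)*(2*(n:ℝ)+α+β+2)*((n:ℝ)-((k:ℝ)+2)+1)*genBinom ((n:ℝ)+β+1) (n-(k+1))) * h3a
        + ((-(((k:ℝ)+2)*(2*(n:ℝ)+α+β+2)*((k:ℝ)+1)) - ((n:ℝ)+1)*(β+1)*((n:ℝ)+α+1))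
            * genBinom ((n:ℝ)+α) (k+1)) * h3b
        + ((-((n:ℝ)-((k:ℝ)+2)+1)*(((n:ℝ)+1)*(β+1)))*genBinom ((n:ℝ)+β+1) (n-(k+1))) * h4
    · -- m = n + 1
      obtain rfl : n = k + 1 := by omega
      rw [if_pos rfl]
      rw [show (k+1)-(k+1) = 0 from by omega, show k+1-1-k = 0 from by omega,
        show (k+1)+1-(k+2) = 0 from by omega]
      simp only [genBinom_zero, mul_one, mul_zero, zero_add]
      push_cast
      rw [show (k:ℝ)+1-1+α = (k:ℝ)+α by ring, show (k:ℝ)+1+1+α = ((k:ℝ)+1+α)+1 by ring]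
      have h := genBinom_succ' ((k:ℝ)+α) k
      have h2 := genBinom_succ' ((k:ℝ)+1+α) (k+1)
      rw [show ((k:ℝ)+α)+1 = (k:ℝ)+1+α by ring] at h
      rw [show k+1+1 = k+2 from rfl] at h2
      push_cast at h h2
      have hk1 : ((k:ℝ)+1) ≠ 0 := by positivity
      have hk2 : ((k:ℝ)+2) ≠ 0 := by positivity
      refine mul_left_cancel₀ (mul_ne_zero hk1 hk2) ?_
      linear_combination
        (((k:ℝ)+2)*(2*((k:ℝ)+1)+α+β+2)*((k:ℝ)+1)) * h
        + (-(((k:ℝ)+1)*(((k:ℝ)+1)+1)*(β+1))) * h2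

/-- The two-variable (homogenized) Jacobi polynomial
`P_n^{(α,β)}(z,w) = ∑_{m=0}^n C(n+α, m) C(n+β, n-m) z^{n-m} (z+w)^m`. -/
def jacobiP2 (α β : ℝ) (n : ℕ) (z w : ℝ) : ℝ :=
  ∑ m ∈ Finset.range (n+1),
    genBinom ((n : ℝ) + α) m * genBinom ((n : ℝ) + β) (n - m) * z^(n - m) * (z + w)^m

/-- for all `α, β, z, w ∈ ℝ` and integers `n ≥ 1`,
`(n+β+1)[(2n+α+β+2)z + (2n+α+1)w] P_n^{(α,β)}(z,w)
= (n+α)(2n+α+β+2)(z+w)² P_{n-1}^{(α,β+2)}(z,w) + (n+1)(β+1) P_{n+1}^{(α,β)}(z,w)`. -/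
theorem jacobi2Identity (α β z w : ℝ) (n : ℕ) (hn : 1 ≤ n) :
    ((n : ℝ) + β + 1) * ((2*(n : ℝ) + α + β + 2)*z + (2*(n : ℝ) + α + 1)*w)
        * jacobiP2 α β n z w
      = ((n : ℝ) + α)*(2*(n : ℝ) + α + β + 2)*(z + w)^2 * jacobiP2 α (β + 2) (n-1) z w
        + ((n : ℝ) + 1)*(β + 1) * jacobiP2 α β (n+1) z w := by
  have hA1 : z * jacobiP2 α β n z w = ∑ m ∈ Finset.range (n+1),
      genBinom ((n:ℝ)+α) m * genBinom ((n:ℝ)+β) (n-m) * (z^(n+1-m) * (z+w)^m) := by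
    rw [jacobiP2, Finset.mul_sum]
    refine Finset.sum_congr rfl fun m hm => ?_
    have hm' : m < n + 1 := Finset.mem_range.1 hm
    rw [show n+1-m = (n-m)+1 from by omega, pow_succ]
    ring
  have hA2 : (z+w) * jacobiP2 α β n z w = ∑ m ∈ Finset.range (n+1),
      genBinom ((n:ℝ)+α) m * genBinom ((n:ℝ)+β) (n-m) * (z^(n+1-(m+1)) * (z+w)^(m+1)) := by
    rw [jacobiP2, Finset.mul_sum]
    refine Finset.sum_congr rfl fun m hm => ?_
    rw [show n+1-(m+1) = n-m from by omega]
    ring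
  have hB : (z+w)^2 * jacobiP2 α (β+2) (n-1) z w = ∑ m ∈ Finset.range n,
      genBinom ((n:ℝ)-1+α) m * genBinom ((n:ℝ)-1+(β+2)) (n-1-m)
        * (z^(n+1-(m+2)) * (z+w)^(m+2)) := by
    rw [jacobiP2, Finset.mul_sum, show n-1+1 = n from by omega]
    simp only [Nat.cast_sub hn, Nat.cast_one]
    refine Finset.sum_congr rfl fun m hm => ?_
    have hm' : m < n := Finset.mem_range.1 hm
    rw [show n+1-(m+2) = n-1-m from by omega]
    ring
  have hC : jacobiP2 α β (n+1) z w = ∑ m ∈ Finset.range (n+2),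
      genBinom ((n:ℝ)+1+α) m * genBinom ((n:ℝ)+1+β) (n+1-m) * (z^(n+1-m) * (z+w)^m) := by
    rw [jacobiP2]
    simp only [Nat.cast_add, Nat.cast_one]
    refine Finset.sum_congr rfl fun m hm => by ring
  have s1 : ∑ m ∈ Finset.range (n+1),
      genBinom ((n:ℝ)+α) m * genBinom ((n:ℝ)+β) (n-m) * (z^(n+1-m) * (z+w)^m)
      = ∑ m ∈ Finset.range (n+2),
        (if m = n+1 then 0 else genBinom ((n:ℝ)+α) m * genBinom ((n:ℝ)+β) (n-m))
          * (z^(n+1-m) * (z+w)^m) := by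
    conv_rhs => rw [show n+2 = (n+1)+1 from rfl, Finset.sum_range_succ]
    rw [if_pos rfl, zero_mul, add_zero]
    refine Finset.sum_congr rfl fun m hm => ?_
    rw [if_neg (Nat.ne_of_lt (Finset.mem_range.1 hm))]
  have s2 : ∑ m ∈ Finset.range (n+1),
      genBinom ((n:ℝ)+α) m * genBinom ((n:ℝ)+β) (n-m) * (z^(n+1-(m+1)) * (z+w)^(m+1))
      = ∑ m ∈ Finset.range (n+2),
        (if m = 0 then 0 else genBinom ((n:ℝ)+α) (m-1) * genBinom ((n:ℝ)+β) (n-(m-1)))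
          * (z^(n+1-m) * (z+w)^m) := by
    conv_rhs => rw [show n+2 = (n+1)+1 from rfl, Finset.sum_range_succ']
    simp
  have s3 : ∑ m ∈ Finset.range n,
      genBinom ((n:ℝ)-1+α) m * genBinom ((n:ℝ)-1+(β+2)) (n-1-m)
        * (z^(n+1-(m+2)) * (z+w)^(m+2))
      = ∑ m ∈ Finset.range (n+2),
        (if m = 0 then 0 else if m-1 = 0 then 0 else
          genBinom ((n:ℝ)-1+α) (m-1-1) * genBinom ((n:ℝ)-1+(β+2)) (n-1-(m-1-1)))
          * (z^(n+1-m) * (z+w)^m) := by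
    conv_rhs => rw [show n+2 = (n+1)+1 from rfl, Finset.sum_range_succ']
    simp only [Nat.add_sub_cancel, Nat.succ_ne_zero, if_false, if_pos rfl, zero_mul, add_zero,
      Nat.add_eq_zero, and_false, ite_false]
    conv_rhs => rw [Finset.sum_range_succ']
    simp
  calc ((n : ℝ) + β + 1) * ((2*(n : ℝ) + α + β + 2)*z + (2*(n : ℝ) + α + 1)*w)
        * jacobiP2 α β n z w
      = ((n:ℝ)+β+1)*(β+1) * (z * jacobiP2 α β n z w)
        + ((n:ℝ)+β+1)*(2*(n:ℝ)+α+1) * ((z+w) * jacobiP2 α β n z w) := by ring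
    _ = ∑ m ∈ Finset.range (n+2),
          (((n:ℝ)+β+1)*(β+1)
              * (if m = n+1 then 0 else genBinom ((n:ℝ)+α) m * genBinom ((n:ℝ)+β) (n-m))
            + ((n:ℝ)+β+1)*(2*(n:ℝ)+α+1)
              * (if m = 0 then 0 else
                  genBinom ((n:ℝ)+α) (m-1) * genBinom ((n:ℝ)+β) (n-(m-1))))
          * (z^(n+1-m) * (z+w)^m) := by
        rw [hA1, hA2, s1, s2, Finset.mul_sum, Finset.mul_sum, ← Finset.sum_add_distrib]
        exact Finset.sum_congr rfl fun m hm => by ring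
    _ = ∑ m ∈ Finset.range (n+2),
          (((n:ℝ)+α)*(2*(n:ℝ)+α+β+2)
              * (if m = 0 then 0 else if m-1 = 0 then 0 else
                  genBinom ((n:ℝ)-1+α) (m-1-1) * genBinom ((n:ℝ)-1+(β+2)) (n-1-(m-1-1)))
            + ((n:ℝ)+1)*(β+1)
              * (genBinom ((n:ℝ)+1+α) m * genBinom ((n:ℝ)+1+β) (n+1-m)))
          * (z^(n+1-m) * (z+w)^m) := by
        refine Finset.sum_congr rfl fun m hm => ?_
        have hm' : m ≤ n + 1 := by have := Finset.mem_range.1 hm; omega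
        have hk := keyCoef α β n hn m hm'
        linear_combination (z^(n+1-m) * (z+w)^m) * hk
    _ = ((n:ℝ)+α)*(2*(n:ℝ)+α+β+2) * ((z+w)^2 * jacobiP2 α (β+2) (n-1) z w)
        + ((n:ℝ)+1)*(β+1) * (jacobiP2 α β (n+1) z w) := by
        rw [hB, hC, s3, Finset.mul_sum, Finset.mul_sum, ← Finset.sum_add_distrib]
        exact Finset.sum_congr rfl fun m hm => by ring
    _ = ((n : ℝ) + α)*(2*(n : ℝ) + α + β + 2)*(z + w)^2 * jacobiP2 α (β + 2) (n-1) z w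
        + ((n : ℝ) + 1)*(β + 1) * jacobiP2 α β (n+1) z w := by ring
end
end
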